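/- (Entropy Distribution Principle) Let (M,d) be a compact metric space and f : M → M a continuous map. Let Z ⊆ M be an arbitrary Borel set. Suppose there exist ε > 0 and s ≥ 0 such that one can find a sequence of Borel probability measures (μ_k), a constant K > 0 and an integer N satisfying: limsup_{k→∞} μ_k(B_n(x,ε)) ≤ K e^{−ns} for every Bowen ball B_n(x,ε) with n ≥ N and B_n(x,ε) ∩ Z ≠ ∅. Furthermore assume that at least one weak* limit ν of a subsequence of (μ_k) satisfies ν(Z) > 0. Then the Bowen topological entropy of Z at scale ε satisfies h_top(Z,ε) ≥ s. -/

import Mathlib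

/-!
Weak* convergence of the `μ_{l k}` to `ν` bounds the `ν`-mass of an open set by the `limsup` of
its `μ_k`-masses (portmanteau), and Bowen balls are open, so `ν(B_n(x, ε)) ≤ K e^{-ns}` for every
ball with `n ≥ N` meeting `Z`. Summing over a cover of `Z` gives the mass distribution bound
`ν Z ≤ K m(Z, s, ε)`, so `m(Z, s, ε) > 0`; as `m(Z, t, ε)` is antitone in `t`, it cannot vanish
for `t < s`.
-/

open MeasureTheory Filter Topology
open scoped ENNReal

/-- The Bowen ball `B_n(x, ε) = {y : d(f^i x, f^i y) < ε for all 0 ≤ i ≤ n-1}`. -/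
def bowenBall {M : Type*} [PseudoMetricSpace M] (f : M → M) (n : ℕ) (ε : ℝ) (x : M) : Set M :=
  {y | ∀ i < n, dist (f^[i] x) (f^[i] y) < ε}

/-- The weight sum `∑ e^{-n s}` over a (finite or countable) collection `C` of pairs
`(x, n)`, each representing a Bowen ball `B_n(x, ε)`. -/
noncomputable def bowenCoverSum {M : Type*} (s : ℝ) (C : Set (M × ℕ)) : ℝ≥0∞ :=
  ∑' p : C, ENNReal.ofReal (Real.exp (-s * ((p : M × ℕ).2 : ℝ)))

/-- `m(Z, s, N, ε)`: the infimum of `∑ e^{-n s}` over all finite or countable covers of `Z`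
by Bowen balls `B_n(x, ε)` with `n ≥ N`. -/
noncomputable def bowenPreMeasure {M : Type*} [PseudoMetricSpace M] (f : M → M) (Z : Set M)
    (s ε : ℝ) (N : ℕ) : ℝ≥0∞ :=
  ⨅ (C : Set (M × ℕ)) (_ : C.Countable) (_ : ∀ p ∈ C, N ≤ p.2)
    (_ : Z ⊆ ⋃ p ∈ C, bowenBall f p.2 ε p.1), bowenCoverSum s C

/-- `m(Z, s, ε) = lim_{N → ∞} m(Z, s, N, ε)`; since `m(Z, s, N, ε)` is nondecreasing in `N`,
the limit equals the supremum. -/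
noncomputable def bowenMeasureOf {M : Type*} [PseudoMetricSpace M] (f : M → M) (Z : Set M)
    (s ε : ℝ) : ℝ≥0∞ :=
  ⨆ N : ℕ, bowenPreMeasure f Z s ε N

theorem isOpen_bowenBall {M : Type*} [PseudoMetricSpace M] {f : M → M} (hf : Continuous f)
    (n : ℕ) (ε : ℝ) (x : M) : IsOpen (bowenBall f n ε x) := by
  have : bowenBall f n ε x = ⋂ i ∈ Finset.range n, {y | dist (f^[i] x) (f^[i] y) < ε} := by
    ext y; simp [bowenBall]
  rw [this]
  exact isOpen_biInter_finset fun i _ =>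
    isOpen_lt (continuous_const.dist (hf.iterate i)) continuous_const

theorem measure_le_limsup_of_tendsto_integral_subseq {Ω : Type*} [MeasurableSpace Ω]
    [TopologicalSpace Ω] [OpensMeasurableSpace Ω] [HasOuterApproxClosed Ω]
    {μ : ℕ → Measure Ω} [∀ k, IsProbabilityMeasure (μ k)] {ν : Measure Ω}
    [IsProbabilityMeasure ν] {l : ℕ → ℕ} (hl : StrictMono l)
    (hlim : ∀ ψ : C(Ω, ℝ), Tendsto (fun k => ∫ y, ψ y ∂(μ (l k))) atTop (𝓝 (∫ y, ψ y ∂ν)))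
    {U : Set Ω} (hU : IsOpen U) :
    ν U ≤ limsup (fun k => μ k U) atTop := by
  let P : ℕ → ProbabilityMeasure Ω := fun k => ⟨μ (l k), inferInstance⟩
  let Q : ProbabilityMeasure Ω := ⟨ν, inferInstance⟩
  have hPQ : Tendsto P atTop (𝓝 Q) :=
    ProbabilityMeasure.tendsto_iff_forall_integral_tendsto.mpr fun ψ => hlim ψ.toContinuousMap
  calc ν U ≤ liminf (fun k => μ (l k) U) atTop :=
        ProbabilityMeasure.le_liminf_measure_open_of_tendsto hPQ hU
    _ ≤ limsup (fun k => μ (l k) U) atTop := liminf_le_limsup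
    _ ≤ limsup (fun k => μ k U) atTop :=
        limsup_le_limsup_of_le (u := fun k => μ k U) hl.tendsto_atTop

theorem bowenCoverSum_antitone {M : Type*} (C : Set (M × ℕ)) :
    Antitone fun s : ℝ => bowenCoverSum s C := by
  intro t s hts
  refine ENNReal.tsum_le_tsum fun p => ENNReal.ofReal_le_ofReal (Real.exp_le_exp.mpr ?_)
  exact mul_le_mul_of_nonneg_right (neg_le_neg hts) (Nat.cast_nonneg _)

section BowenMeasure

variable {M : Type*} [PseudoMetricSpace M] (f : M → M) (Z : Set M) (ε : ℝ)

theorem bowenMeasureOf_antitone : Antitone fun s : ℝ => bowenMeasureOf f Z s ε :=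
  fun _ _ hts => iSup_mono fun _ =>
    iInf₂_mono fun C _ => iInf₂_mono fun _ _ => bowenCoverSum_antitone C hts

variable [MeasurableSpace M] (ν : Measure M) {s : ℝ} {N : ℕ} {c : ℝ≥0∞}

theorem measure_le_mul_bowenCoverSum
    (hν : ∀ (x : M) (n : ℕ), N ≤ n → (bowenBall f n ε x ∩ Z).Nonempty →
      ν (bowenBall f n ε x) ≤ c * ENNReal.ofReal (Real.exp (-s * n)))
    {C : Set (M × ℕ)} (hC : C.Countable) (hCN : ∀ p ∈ C, N ≤ p.2)
    (hZC : Z ⊆ ⋃ p ∈ C, bowenBall f p.2 ε p.1) :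
    ν Z ≤ c * bowenCoverSum s C := by
  have hZ : Z ⊆ ⋃ p ∈ C, Z ∩ bowenBall f p.2 ε p.1 := by
    intro z hz
    obtain ⟨p, hp, hzp⟩ := Set.mem_iUnion₂.mp (hZC hz)
    exact Set.mem_iUnion₂.mpr ⟨p, hp, hz, hzp⟩
  calc ν Z ≤ ∑' p : C, ν (Z ∩ bowenBall f p.1.2 ε p.1.1) :=
        (measure_mono hZ).trans (measure_biUnion_le ν hC _)
    _ ≤ ∑' p : C, c * ENNReal.ofReal (Real.exp (-s * p.1.2)) := by
        refine ENNReal.tsum_le_tsum fun p => ?_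
        rcases (Z ∩ bowenBall f p.1.2 ε p.1.1).eq_empty_or_nonempty with hempty | hmeet
        · simp [hempty]
        · exact (measure_mono Set.inter_subset_right).trans
            (hν _ _ (hCN p p.2) (Set.inter_comm _ _ ▸ hmeet))
    _ = c * bowenCoverSum s C := ENNReal.tsum_mul_left

theorem measure_le_mul_bowenMeasureOf (hc₀ : c ≠ 0) (hc : c ≠ ⊤)
    (hν : ∀ (x : M) (n : ℕ), N ≤ n → (bowenBall f n ε x ∩ Z).Nonempty →
      ν (bowenBall f n ε x) ≤ c * ENNReal.ofReal (Real.exp (-s * n))) :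
    ν Z ≤ c * bowenMeasureOf f Z s ε := by
  have hpre : ν Z ≤ c * bowenPreMeasure f Z s ε N := by
    simp only [bowenPreMeasure, ENNReal.mul_iInf_of_ne hc₀ hc]
    exact le_iInf₂ fun C hC => le_iInf₂ fun hCN hZC =>
      measure_le_mul_bowenCoverSum f Z ε ν hν hC hCN hZC
  exact hpre.trans (by gcongr; exact le_iSup (bowenPreMeasure f Z s ε) N)

end BowenMeasure

theorem entropy_distribution_principle_general
    {M : Type*} [MetricSpace M] [MeasurableSpace M] [BorelSpace M]
    (f : M → M) (hf : Continuous f) (Z : Set M)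
    (ε s : ℝ)
    (μ : ℕ → Measure M) (hμ : ∀ k, IsProbabilityMeasure (μ k))
    (K : ℝ) (hK : 0 < K) (N : ℕ)
    (hbound : ∀ (x : M) (n : ℕ), N ≤ n → (bowenBall f n ε x ∩ Z).Nonempty →
      limsup (fun k => μ k (bowenBall f n ε x)) atTop ≤
        ENNReal.ofReal (K * Real.exp (-s * n)))
    (ν : Measure M) (hν : IsProbabilityMeasure ν)
    (l : ℕ → ℕ) (hl : StrictMono l)
    (hlim : ∀ ψ : C(M, ℝ), Tendsto (fun k => ∫ y, ψ y ∂(μ (l k))) atTop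
      (𝓝 (∫ y, ψ y ∂ν)))
    (hνZ : 0 < ν Z) :
    ∀ t : ℝ, bowenMeasureOf f Z t ε = 0 → s ≤ t := by
  intro t ht
  by_contra! hts
  have hball : ∀ (x : M) (n : ℕ), N ≤ n → (bowenBall f n ε x ∩ Z).Nonempty →
      ν (bowenBall f n ε x) ≤ ENNReal.ofReal K * ENNReal.ofReal (Real.exp (-s * n)) :=
    fun x n hn hmeet =>
      (measure_le_limsup_of_tendsto_integral_subseq hl hlim (isOpen_bowenBall hf n ε x)).trans
        ((hbound x n hn hmeet).trans_eq (ENNReal.ofReal_mul' (Real.exp_pos _).le))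
  have hs_null : bowenMeasureOf f Z s ε = 0 :=
    le_antisymm ((bowenMeasureOf_antitone f Z ε hts.le).trans ht.le) bot_le
  have hνZ_null : ν Z ≤ 0 := by
    simpa [hs_null] using measure_le_mul_bowenMeasureOf f Z ε ν
      (ENNReal.ofReal_pos.mpr hK).ne' ENNReal.ofReal_ne_top hball
  exact hνZ.not_ge hνZ_null

/-- Entropy Distribution Principle: with probability measures `μ_k` satisfying
`limsup_k μ_k(B_n(x,ε)) ≤ K e^{-n s}` for every Bowen ball `B_n(x,ε)` (`n ≥ N`) meeting `Z`,
and some weak* limit `ν` of a subsequence of `(μ_k)` with `ν Z > 0`, the Bowen topological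
entropy of `Z` at scale `ε` satisfies `h_top(Z, ε) ≥ s`: since
`h_top(Z, ε) = inf {t : m(Z, t, ε) = 0}`, this says `s` is a lower bound of that set. -/
theorem entropy_distribution_principle
    {M : Type*} [MetricSpace M] [CompactSpace M] [MeasurableSpace M] [BorelSpace M]
    (f : M → M) (hf : Continuous f) (Z : Set M)
    (ε s : ℝ) (hε : 0 < ε) (hs : 0 ≤ s)
    (μ : ℕ → Measure M) (hμ : ∀ k, IsProbabilityMeasure (μ k))
    (K : ℝ) (hK : 0 < K) (N : ℕ)
    (hbound : ∀ (x : M) (n : ℕ), N ≤ n → (bowenBall f n ε x ∩ Z).Nonempty →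
      limsup (fun k => μ k (bowenBall f n ε x)) atTop ≤
        ENNReal.ofReal (K * Real.exp (-s * n)))
    (ν : Measure M) (hν : IsProbabilityMeasure ν)
    (l : ℕ → ℕ) (hl : StrictMono l)
    (hlim : ∀ ψ : C(M, ℝ), Tendsto (fun k => ∫ y, ψ y ∂(μ (l k))) atTop
      (𝓝 (∫ y, ψ y ∂ν)))
    (hνZ : 0 < ν Z) :
    ∀ t : ℝ, bowenMeasureOf f Z t ε = 0 → s ≤ t :=
  entropy_distribution_principle_general f hf Z ε s μ hμ K hK N hbound ν hν l hl hlim hνZ
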